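/- If every maximal clique of the projected graph of H is a hyperedge of H (H is conformal), then for any three hyperedges E_i, E_j, E_q of H there exists a hyperedge E such that (E_i ∩ E_j) ∪ (E_j ∩ E_q) ∪ (E_q ∩ E_i) ⊆ E. -/

import Mathlib

variable {V : Type*} [DecidableEq V] [Fintype V]

/-- Adjacency in the projected graph of a hypergraph with hyperedge set `E`. -/
def ProjAdj (E : Finset (Finset V)) (u v : V) : Prop :=
  u ≠ v ∧ ∃ e ∈ E, u ∈ e ∧ v ∈ e

/-- A clique in the projected graph. -/
def IsPClique (E : Finset (Finset V)) (C : Finset V) : Prop :=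
  ∀ u ∈ C, ∀ v ∈ C, u ≠ v → ProjAdj E u v

/-- A maximal clique in the projected graph. -/
def IsMaxPClique (E : Finset (Finset V)) (C : Finset V) : Prop :=
  IsPClique E C ∧ ∀ D : Finset V, IsPClique E D → C ⊆ D → C = D

theorem isMaxPClique_iff_maximal {α : Type*} {E : Finset (Finset α)} {C : Finset α} :
    IsMaxPClique E C ↔ Maximal (IsPClique E) C :=
  ⟨fun h => ⟨h.1, fun _ hD hCD => (h.2 _ hD hCD).ge⟩,
    fun h => ⟨h.1, fun _ hD hCD => le_antisymm hCD (h.2 hD hCD)⟩⟩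

theorem IsPClique.exists_isMaxPClique_superset {α : Type*} [Finite α] {E : Finset (Finset α)}
    {S : Finset α} (hS : IsPClique E S) : ∃ C, IsMaxPClique E C ∧ S ⊆ C := by
  obtain ⟨C, hSC, hC⟩ := Finite.exists_le_maximal hS
  exact ⟨C, isMaxPClique_iff_maximal.2 hC, hSC⟩

/-- Each vertex of the union lies in two of the three hyperedges, so any two of its vertices
share one of them. -/
theorem isPClique_union_inter {α : Type*} [DecidableEq α] {E : Finset (Finset α)}
    {Ei Ej Ek : Finset α} (hEi : Ei ∈ E) (hEj : Ej ∈ E) (hEk : Ek ∈ E) :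
    IsPClique E ((Ei ∩ Ej) ∪ (Ej ∩ Ek) ∪ (Ek ∩ Ei)) := by
  intro u hu v hv huv
  refine ⟨huv, ?_⟩
  simp only [Finset.mem_union, Finset.mem_inter] at hu hv
  rcases hu with (⟨_, _⟩ | ⟨_, _⟩) | ⟨_, _⟩ <;>
    rcases hv with (⟨_, _⟩ | ⟨_, _⟩) | ⟨_, _⟩ <;>
    first
    | exact ⟨Ei, hEi, ‹_›, ‹_›⟩
    | exact ⟨Ej, hEj, ‹_›, ‹_›⟩
    | exact ⟨Ek, hEk, ‹_›, ‹_›⟩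

theorem stmt2_general (E : Finset (Finset V))
    (hconf : ∀ C : Finset V, IsMaxPClique E C → C ∈ E) :
    ∀ Ei ∈ E, ∀ Ej ∈ E, ∀ Ek ∈ E,
      ∃ e ∈ E, (Ei ∩ Ej) ∪ (Ej ∩ Ek) ∪ (Ek ∩ Ei) ⊆ e := by
  intro Ei hEi Ej hEj Ek hEk
  obtain ⟨C, hC, hSC⟩ := (isPClique_union_inter hEi hEj hEk).exists_isMaxPClique_superset
  exact ⟨C, hconf C hC, hSC⟩

theorem stmt2 (E : Finset (Finset V))
    (hne : ∀ e ∈ E, e.Nonempty)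
    (hcov : ∀ v : V, ∃ e ∈ E, v ∈ e)
    (hconf : ∀ C : Finset V, IsMaxPClique E C → C ∈ E) :
    ∀ Ei ∈ E, ∀ Ej ∈ E, ∀ Ek ∈ E,
      ∃ e ∈ E, (Ei ∩ Ej) ∪ (Ej ∩ Ek) ∪ (Ek ∩ Ei) ⊆ e :=
  stmt2_general E hconf
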